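/- Let ψ∈N̂ₙ and α∈P̂ₙ. If the path expression [ψ]α is XP⁻-consistent, then ⟨α=α⟩ is a conjunct of ψ. As an immediate consequence, if ⟨↓[ψ]α⟩ is XP⁻-consistent, then ⟨α=α⟩ is a conjunct of ψ. -/
import Mathlib


attribute [local instance] Classical.propDecidable

mutual
/-- Path expressions of `XPath↓⁻` (no inequality tests in the language). -/
inductive PathExpr (A : Type) : Type
  | eps : PathExpr A
  | down : PathExpr A
  | test : NodeExpr A → PathExpr A
  | comp : PathExpr A → PathExpr A → PathExpr A
  | union : PathExpr A → PathExpr A → PathExpr A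

/-- Node expressions of `XPath↓⁻` (no inequality tests in the language). -/
inductive NodeExpr (A : Type) : Type
  | lab : A → NodeExpr A
  | neg : NodeExpr A → NodeExpr A
  | conj : NodeExpr A → NodeExpr A → NodeExpr A
  | diam : PathExpr A → NodeExpr A
  | eqTest : PathExpr A → PathExpr A → NodeExpr A
end

namespace XPathMinus

variable {A : Type}

/-- Defined disjunction `φ ∨ ψ := ¬(¬φ ∧ ¬ψ)`. -/
def nOr (φ ψ : NodeExpr A) : NodeExpr A := .neg (.conj (.neg φ) (.neg ψ))

/-- `⊤ := ⟨ε⟩`. -/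
def topN : NodeExpr A := .diam .eps

/-- `⊥ := ¬⊤`. -/
def botN : NodeExpr A := .neg topN

/-- `⊥̄ := [¬⟨ε⟩]`. -/
def botP : PathExpr A := .test (.neg (.diam .eps))

def bigOr (l : List (NodeExpr A)) : NodeExpr A := l.foldr nOr botN

def bigUnion (l : List (PathExpr A)) : PathExpr A := l.foldr PathExpr.union botP

/-- A data tree: a tree (connected, acyclic, unique parents except the root)
whose nodes carry labels from `A`, together with a partition of the nodes
(presented as an equivalence relation `eqd`). -/
structure DataTree (A : Type) where
  X : Type
  child : X → X → Prop
  root : X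
  label : X → A
  eqd : X → X → Prop
  eqd_equiv : Equivalence eqd
  parent_unique : ∀ ⦃x y z : X⦄, child x z → child y z → x = y
  root_no_parent : ∀ x : X, ¬ child x root
  reach : ∀ x : X, Relation.ReflTransGen child root x
  acyclic : ∀ x : X, ¬ Relation.TransGen child x x

mutual
/-- Semantics of path expressions. -/
def psem (T : DataTree A) : PathExpr A → T.X → T.X → Prop
  | .eps, x, y => x = y
  | .down, x, y => T.child x y
  | .test φ, x, y => x = y ∧ nsem T φ x
  | .comp α β, x, z => ∃ y, psem T α x y ∧ psem T β y z
  | .union α β, x, y => psem T α x y ∨ psem T β x y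

/-- Semantics of node expressions. -/
def nsem (T : DataTree A) : NodeExpr A → T.X → Prop
  | .lab a, x => T.label x = a
  | .neg φ, x => ¬ nsem T φ x
  | .conj φ ψ, x => nsem T φ x ∧ nsem T ψ x
  | .diam α, x => ∃ y, psem T α x y
  | .eqTest α β, x => ∃ y z, psem T α x y ∧ psem T β x z ∧ T.eqd y z
end

/-- Semantic equivalence of node expressions: same denotation in every data tree. -/
def nodeValid (φ ψ : NodeExpr A) : Prop :=
  ∀ (T : DataTree A) (x : T.X), nsem T φ x ↔ nsem T ψ x

/-- Semantic equivalence of path expressions: same denotation in every data tree. -/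
def pathValid (α β : PathExpr A) : Prop :=
  ∀ (T : DataTree A) (x y : T.X), psem T α x y ↔ psem T β x y

mutual
/-- Derivability of node equivalences in the axiomatic system `XP⁻`. -/
inductive NDer {A : Type} [Fintype A] : NodeExpr A → NodeExpr A → Prop
  | refl (φ : NodeExpr A) : NDer φ φ
  | symm {φ ψ : NodeExpr A} : NDer φ ψ → NDer ψ φ
  | trans {φ ψ ρ : NodeExpr A} : NDer φ ψ → NDer ψ ρ → NDer φ ρ
  | congr_neg {φ ψ : NodeExpr A} : NDer φ ψ → NDer (.neg φ) (.neg ψ)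
  | congr_conj {φ φ' ψ ψ' : NodeExpr A} :
      NDer φ φ' → NDer ψ ψ' → NDer (.conj φ ψ) (.conj φ' ψ')
  | congr_diam {α β : PathExpr A} : PDer α β → NDer (.diam α) (.diam β)
  | congr_eqTest {α α' β β' : PathExpr A} :
      PDer α α' → PDer β β' → NDer (.eqTest α β) (.eqTest α' β')
  | lbAx1 : NDer topN (bigOr ((Finset.univ : Finset A).toList.map NodeExpr.lab))
  | lbAx2 {a b : A} : a ≠ b → NDer botN (.conj (.lab a) (.lab b))
  | ndAx1 (φ ψ : NodeExpr A) :
      NDer φ (nOr (.neg (nOr (.neg φ) ψ)) (.neg (nOr (.neg φ) (.neg ψ))))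
  | ndAx2 (φ : NodeExpr A) : NDer (.diam (.test φ)) φ
  | ndAx3 (α β : PathExpr A) : NDer (.diam (.union α β)) (nOr (.diam α) (.diam β))
  | ndAx4 (α β : PathExpr A) : NDer (.diam (.comp α β)) (.diam (.comp α (.test (.diam β))))
  | eqAx1 (α β : PathExpr A) : NDer (.eqTest α β) (.eqTest β α)
  | eqAx2 (α β γ : PathExpr A) :
      NDer (.eqTest (.union α β) γ) (nOr (.eqTest α γ) (.eqTest β γ))
  | eqAx3 (φ : NodeExpr A) (α β : PathExpr A) :
      NDer (.conj φ (.eqTest α β)) (.eqTest (.comp (.test φ) α) β)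
  | eqAx4 (α β : PathExpr A) : NDer (nOr (.eqTest α β) (.diam α)) (.diam α)
  | eqAx5 (γ α β : PathExpr A) :
      NDer (nOr (.diam (.comp γ (.test (.eqTest α β)))) (.eqTest (.comp γ α) (.comp γ β)))
        (.eqTest (.comp γ α) (.comp γ β))
  | eqAx6 (α : PathExpr A) : NDer (.eqTest α α) (.diam α)
  | eqAx7 (α β : PathExpr A) :
      NDer (nOr (.conj (.eqTest α .eps) (.eqTest β .eps)) (.eqTest α β)) (.eqTest α β)
  | eqAx8 (α β γ : PathExpr A) :
      NDer (nOr (.eqTest α (.comp β (.test (.eqTest .eps γ)))) (.eqTest α (.comp β γ)))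
        (.eqTest α (.comp β γ))

/-- Derivability of path equivalences in the axiomatic system `XP⁻`. -/
inductive PDer {A : Type} [Fintype A] : PathExpr A → PathExpr A → Prop
  | refl (α : PathExpr A) : PDer α α
  | symm {α β : PathExpr A} : PDer α β → PDer β α
  | trans {α β γ : PathExpr A} : PDer α β → PDer β γ → PDer α γ
  | congr_test {φ ψ : NodeExpr A} : NDer φ ψ → PDer (.test φ) (.test ψ)
  | congr_comp {α α' β β' : PathExpr A} :
      PDer α α' → PDer β β' → PDer (.comp α β) (.comp α' β')
  | congr_union {α α' β β' : PathExpr A} :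
      PDer α α' → PDer β β' → PDer (.union α β) (.union α' β')
  | prAx1 (α β : PathExpr A) : PDer (.comp (.comp α (.test (.neg (.diam β)))) β) botP
  | prAx2 : PDer (.test topN) (.eps : PathExpr A)
  | prAx3 (φ ψ : NodeExpr A) : PDer (.test (nOr φ ψ)) (.union (.test φ) (.test ψ))
  | isAx1 (α β γ : PathExpr A) : PDer (.union (.union α β) γ) (.union α (.union β γ))
  | isAx2 (α β : PathExpr A) : PDer (.union α β) (.union β α)
  | isAx3 (α : PathExpr A) : PDer (.union α α) α
  | isAx4 (α β γ : PathExpr A) : PDer (.comp α (.comp β γ)) (.comp (.comp α β) γ)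
  | isAx5l (α : PathExpr A) : PDer (.comp .eps α) α
  | isAx5r (α : PathExpr A) : PDer (.comp α .eps) α
  | isAx6l (α β γ : PathExpr A) :
      PDer (.comp α (.union β γ)) (.union (.comp α β) (.comp α γ))
  | isAx6r (α β γ : PathExpr A) :
      PDer (.comp (.union α β) γ) (.union (.comp α γ) (.comp β γ))
  | isAx7 (α : PathExpr A) : PDer (.union botP α) α
end

/-- A node expression is `XP⁻`-consistent if it is not provably equivalent to `⊥`. -/
def NConsistent [Fintype A] (φ : NodeExpr A) : Prop := ¬ NDer φ botN

/-- A path expression is `XP⁻`-consistent if it is not provably equivalent to `⊥̄`. -/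
def PConsistent [Fintype A] (α : PathExpr A) : Prop := ¬ PDer α botP

/-- The normal form `a ∧ ⋀_{d ∈ C} d ∧ ⋀_{d ∈ D∖C} ¬d`, built along the canonical listing `D`. -/
noncomputable def mkNF (a : A) (C D : List (NodeExpr A)) : NodeExpr A :=
  D.foldl (fun acc d => .conj acc (if d ∈ C then d else .neg d)) (.lab a)

/-- The canonical lists of normal-form path expressions (first component)
and normal-form node expressions (second component) at each level. -/
noncomputable def NF (A : Type) [Fintype A] : ℕ → List (PathExpr A) × List (NodeExpr A)
  | 0 =>
    ([.eps],
      (Finset.univ : Finset A).toList.map fun a =>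
        NodeExpr.conj (.lab a) (.eqTest .eps .eps))
  | n+1 =>
    let P := (NF A n).1
    let N := (NF A n).2
    let P' : List (PathExpr A) :=
      .eps :: N.flatMap fun ψ => P.map fun β => PathExpr.comp .down (.comp (.test ψ) β)
    let D : List (NodeExpr A) :=
      P'.flatMap fun α => P'.map fun β => NodeExpr.eqTest α β
    let cands : List (NodeExpr A) :=
      D.sublists.flatMap fun C => (Finset.univ : Finset A).toList.map fun a => mkNF a C D
    (P', cands.filter fun φ => decide (NConsistent φ))

/-- `P̂ₙ`: normal-form path expressions of level `n`. -/
noncomputable def Pnf (A : Type) [Fintype A] (n : ℕ) : Set (PathExpr A) :=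
  {α | α ∈ (NF A n).1}

/-- `N̂ₙ`: normal-form node expressions of level `n`. -/
noncomputable def Nnf (A : Type) [Fintype A] (n : ℕ) : Set (NodeExpr A) :=
  {φ | φ ∈ (NF A n).2}

/-- `D̂ₙ`: data-aware diamonds between normal-form paths of level `n`. -/
noncomputable def Dnf (A : Type) [Fintype A] (n : ℕ) : Set (NodeExpr A) :=
  {φ | ∃ α ∈ Pnf A n, ∃ β ∈ Pnf A n, φ = NodeExpr.eqTest α β}

/-- The conjuncts of a node expression (flattening `∧`). -/
def conjuncts : NodeExpr A → List (NodeExpr A)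
  | .conj φ ψ => conjuncts φ ++ conjuncts ψ
  | φ => [φ]

/-- `δ` is a conjunct of `ψ`. -/
def IsConjunct (δ ψ : NodeExpr A) : Prop := δ ∈ conjuncts ψ

/-- Length of a path expression. -/
def plen : PathExpr A → ℕ
  | .eps => 0
  | .down => 1
  | .test _ => 0
  | .comp α β => plen α + plen β
  | .union α β => max (plen α) (plen β)

mutual
/-- Downward depth of a node expression. -/
def ndd : NodeExpr A → ℕ
  | .lab _ => 0
  | .neg φ => ndd φ
  | .conj φ ψ => max (ndd φ) (ndd ψ)
  | .diam α => pdd α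
  | .eqTest α β => max (pdd α) (pdd β)

/-- Downward depth of a path expression. -/
def pdd : PathExpr A → ℕ
  | .eps => 0
  | .down => 1
  | .test φ => ndd φ
  | .comp α β => max (max (pdd α) (pdd β)) (plen α + pdd β)
  | .union α β => max (pdd α) (pdd β)
end

/-- The path `↓[ψ]α`. -/
def dPath (ψ : NodeExpr A) (α : PathExpr A) : PathExpr A :=
  .comp .down (.comp (.test ψ) α)

/-- A path expression whose leftmost symbol is `↓`. -/
def startsWithDown : PathExpr A → Prop
  | .down => True
  | .comp α _ => startsWithDown α
  | _ => False

end XPathMinus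

namespace XPathMinus

variable {A : Type} [Fintype A]

/-- Transfer a derivable path equivalence between tests to the node level. -/
private lemma nder_of_tests {φ ψ : NodeExpr A} (h : PDer (.test φ) (.test ψ)) : NDer φ ψ :=
  (NDer.ndAx2 φ).symm.trans ((NDer.congr_diam h).trans (NDer.ndAx2 ψ))

private lemma orCongr {φ φ' ψ ψ' : NodeExpr A} (h1 : NDer φ φ') (h2 : NDer ψ ψ') :
    NDer (nOr φ ψ) (nOr φ' ψ') :=
  NDer.congr_neg (NDer.congr_conj (NDer.congr_neg h1) (NDer.congr_neg h2))

private lemma orC {φ ψ : NodeExpr A} : NDer (nOr φ ψ) (nOr ψ φ) :=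
  nder_of_tests ((PDer.prAx3 φ ψ).trans ((PDer.isAx2 _ _).trans (PDer.prAx3 ψ φ).symm))

private lemma orA {φ ψ ρ : NodeExpr A} : NDer (nOr (nOr φ ψ) ρ) (nOr φ (nOr ψ ρ)) :=
  nder_of_tests <| (PDer.prAx3 _ ρ).trans <|
    (PDer.congr_union (PDer.prAx3 φ ψ) (PDer.refl _)).trans <|
    (PDer.isAx1 _ _ _).trans <|
    ((PDer.congr_union (PDer.refl _) (PDer.prAx3 ψ ρ)).symm).trans (PDer.prAx3 φ (nOr ψ ρ)).symm

private lemma orI {φ : NodeExpr A} : NDer (nOr φ φ) φ :=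
  nder_of_tests ((PDer.prAx3 φ φ).trans (PDer.isAx3 _))

private lemma orZ {φ : NodeExpr A} : NDer (nOr φ botN) φ :=
  nder_of_tests <| (PDer.prAx3 φ botN).trans <| (PDer.isAx2 _ _).trans (PDer.isAx7 _)

/-- Huntington instance `x ≡ ¬(x ∨ ¬x) ∨ ¬¬x`. -/
private lemma l1 (x : NodeExpr A) :
    NDer x (nOr (.neg (nOr x (.neg x))) (.neg (.neg x))) :=
  (NDer.ndAx1 x x).trans (orCongr (NDer.congr_neg orC) (NDer.congr_neg orI))

/-- Absorption skeleton: `¬(¬a ∨ ¬b) ∨ b ≡ b`. -/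
private lemma habs (a b : NodeExpr A) :
    NDer (nOr (.neg (nOr (.neg a) (.neg b))) b) b :=
  (orCongr (NDer.congr_neg orC) (NDer.ndAx1 b (.neg a))).trans <|
    orA.symm.trans <| (orCongr orI (NDer.refl _)).trans (NDer.ndAx1 b (.neg a)).symm

private lemma nn0 : NDer (.neg (.neg botN)) (botN : NodeExpr A) :=
  (((l1 botN).trans (orCongr (NDer.congr_neg (orC.trans orZ)) (NDer.refl _))).trans orI).symm

private lemma l8 (x : NodeExpr A) :
    NDer (.neg botN) (nOr (.neg x) (.neg (.neg x))) :=
  (NDer.ndAx1 (.neg botN) x).trans <|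
    orCongr
      (NDer.congr_neg ((orCongr nn0 (NDer.refl x)).trans (orC.trans orZ)))
      (NDer.congr_neg ((orCongr nn0 (NDer.refl (.neg x))).trans (orC.trans orZ)))

private lemma l10 (b : NodeExpr A) : NDer (nOr (.neg b) (.neg botN)) (.neg botN) :=
  (orCongr (NDer.refl _) (l8 b)).trans <|
    orA.symm.trans <| (orCongr orI (NDer.refl _)).trans (l8 b).symm

private lemma l11 (a : NodeExpr A) : NDer (nOr a (.neg botN)) (.neg botN) :=
  (orCongr (l1 a) (NDer.refl _)).trans <|
    orA.trans <| (orCongr (NDer.refl _) (l10 (.neg a))).trans (l10 (nOr a (.neg a)))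

private lemma l12 (x : NodeExpr A) : NDer (nOr x (.neg x)) (.neg botN) :=
  (orCongr (l1 x) (NDer.refl _)).trans <|
    orA.trans <|
      (orCongr (NDer.refl _) (orC.trans (l8 x).symm)).trans (l10 (nOr x (.neg x)))

/-- Double negation elimination. -/
private lemma lnn (x : NodeExpr A) : NDer (.neg (.neg x)) x :=
  ((l1 x).trans <|
    (orCongr ((NDer.congr_neg (l12 x)).trans nn0) (NDer.refl _)).trans <|
      orC.trans orZ).symm

/-- Express conjunction through disjunction and negation. -/
private lemma conj_as (a b : NodeExpr A) :
    NDer (.conj a b) (.neg (nOr (.neg a) (.neg b))) := by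
  show NDer (.conj a b) (.neg (.neg (.conj (.neg (.neg a)) (.neg (.neg b)))))
  exact (NDer.congr_conj (lnn a).symm (lnn b).symm).trans (lnn _).symm

private lemma conj_le_right (a b : NodeExpr A) : NDer (nOr (.conj a b) b) b :=
  (orCongr (conj_as a b) (NDer.refl b)).trans (habs a b)

private lemma conj_le_left (a b : NodeExpr A) : NDer (nOr (.conj a b) a) a :=
  (orCongr ((conj_as a b).trans (NDer.congr_neg orC)) (NDer.refl a)).trans (habs b a)

private lemma nle_trans {a b c : NodeExpr A} (h1 : NDer (nOr a b) b) (h2 : NDer (nOr b c) c) :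
    NDer (nOr a c) c :=
  (orCongr (NDer.refl a) h2.symm).trans (orA.symm.trans ((orCongr h1 (NDer.refl c)).trans h2))

private lemma conjuncts_conj (φ χ : NodeExpr A) :
    conjuncts (.conj φ χ) = conjuncts φ ++ conjuncts χ := rfl

/-- A conjunct is above its conjunction in the derivable order. -/
private lemma conjunct_le : ∀ (ψ δ : NodeExpr A), δ ∈ conjuncts ψ → NDer (nOr ψ δ) δ
  | .conj φ χ, δ, h => by
    rw [conjuncts_conj, List.mem_append] at h
    rcases h with h | h
    · exact nle_trans (conj_le_left φ χ) (conjunct_le φ δ h)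
    · exact nle_trans (conj_le_right φ χ) (conjunct_le χ δ h)
  | .lab a, δ, h => by
    have : δ = NodeExpr.lab a := by simpa [conjuncts] using h
    subst this; exact orI
  | .neg φ, δ, h => by
    have : δ = NodeExpr.neg φ := by simpa [conjuncts] using h
    subst this; exact orI
  | .diam β, δ, h => by
    have : δ = NodeExpr.diam β := by simpa [conjuncts] using h
    subst this; exact orI
  | .eqTest β γ, δ, h => by
    have : δ = NodeExpr.eqTest β γ := by simpa [conjuncts] using h
    subst this; exact orI

/-- If `ψ ≤ ¬⟨α⟩` then `[ψ]α ≡ ⊥̄`. -/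
private lemma path_bot {ψ : NodeExpr A} (α : PathExpr A)
    (h : NDer (nOr ψ (.neg (.diam α))) (.neg (.diam α))) :
    PDer (.comp (.test ψ) α) botP := by
  set δ : NodeExpr A := .neg (.diam α) with hδ
  have hAB : PDer (.union (.test ψ) (.test δ)) (.test δ) :=
    (PDer.prAx3 ψ δ).symm.trans (PDer.congr_test h)
  have hB : PDer (.comp (.test δ) α) botP :=
    (PDer.congr_comp (PDer.isAx5l (.test δ)).symm (PDer.refl α)).trans (PDer.prAx1 .eps α)
  exact (PDer.isAx7 _).symm.trans <|
    (PDer.congr_union hB.symm (PDer.refl _)).trans <|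
      (PDer.isAx2 _ _).trans <|
        (PDer.isAx6r (.test ψ) (.test δ) α).symm.trans <|
          (PDer.congr_comp hAB (PDer.refl α)).trans hB

private lemma down_bot : PDer (.comp .down botP) (botP : PathExpr A) :=
  (PDer.isAx5r _).symm.trans (PDer.prAx1 .down .eps)

private lemma diam_bot {ψ : NodeExpr A} {α : PathExpr A}
    (hp : PDer (.comp (.test ψ) α) botP) :
    NDer (.diam (dPath ψ α)) (botN : NodeExpr A) :=
  (NDer.congr_diam ((PDer.congr_comp (PDer.refl .down) hp).trans down_bot)).trans
    (NDer.ndAx2 botN)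

private lemma mem_conjuncts_foldl (F : NodeExpr A → NodeExpr A) :
    ∀ (l : List (NodeExpr A)) (acc x : NodeExpr A), x ∈ conjuncts acc →
      x ∈ conjuncts (l.foldl (fun acc d => .conj acc (F d)) acc)
  | [], acc, x, h => h
  | d :: l, acc, x, h => by
    refine mem_conjuncts_foldl F l _ x ?_
    rw [conjuncts_conj, List.mem_append]; exact Or.inl h

private lemma mem_conjuncts_foldl' (F : NodeExpr A → NodeExpr A) :
    ∀ (l : List (NodeExpr A)) (acc d x : NodeExpr A), d ∈ l → x ∈ conjuncts (F d) →
      x ∈ conjuncts (l.foldl (fun acc d => .conj acc (F d)) acc)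
  | [], acc, d, x, hd, hx => by cases hd
  | e :: l, acc, d, x, hd, hx => by
    rcases List.mem_cons.1 hd with rfl | hd
    · refine mem_conjuncts_foldl F l _ x ?_
      rw [conjuncts_conj, List.mem_append]; exact Or.inr hx
    · exact mem_conjuncts_foldl' F l _ d x hd hx

end XPathMinus

/-- If `ψ ∈ N̂ₙ`, `α ∈ P̂ₙ` and `[ψ]α` is `XP⁻`-consistent, then `⟨α = α⟩` is a
conjunct of `ψ`; consequently the same holds if `⟨↓[ψ]α⟩` is `XP⁻`-consistent. -/
theorem XPathMinus.next_path_is_conjunct {A : Type} [Fintype A] (hA : 1 < Fintype.card A)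
    (n : ℕ) (ψ : NodeExpr A) (α : PathExpr A)
    (hψ : ψ ∈ Nnf A n) (hα : α ∈ Pnf A n) :
    (PConsistent (PathExpr.comp (.test ψ) α) → IsConjunct (.eqTest α α) ψ) ∧
    (NConsistent (.diam (dPath ψ α)) → IsConjunct (.eqTest α α) ψ) := by
  cases n with
  | zero =>
    have hα0 : α = .eps := by
      simpa [Pnf, NF] using hα
    subst hα0
    have hkey : IsConjunct (.eqTest .eps .eps) ψ := by
      rw [Nnf] at hψ
      simp only [NF, List.mem_map] at hψ
      obtain ⟨a, -, rfl⟩ := hψ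
      simp [IsConjunct, conjuncts]
    exact ⟨fun _ => hkey, fun _ => hkey⟩
  | succ m =>
    rw [Nnf] at hψ
    rw [Pnf] at hα
    rw [NF] at hψ hα
    simp only at hψ hα
    set P' : List (PathExpr A) :=
      .eps :: (NF A m).2.flatMap
        (fun ψ => (NF A m).1.map fun β => PathExpr.comp .down (.comp (.test ψ) β)) with hP'
    set D : List (NodeExpr A) :=
      P'.flatMap (fun α => P'.map fun β => NodeExpr.eqTest α β) with hD
    have hψc : ψ ∈ D.sublists.flatMap
        (fun C => (Finset.univ : Finset A).toList.map fun a => mkNF a C D) :=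
      (List.mem_filter.1 hψ).1
    rw [List.mem_flatMap] at hψc
    obtain ⟨C, -, hψm⟩ := hψc
    rw [List.mem_map] at hψm
    obtain ⟨a, -, rfl⟩ := hψm
    have hmemD : NodeExpr.eqTest α α ∈ D := by
      rw [hD, List.mem_flatMap]
      exact ⟨α, hα, List.mem_map.2 ⟨α, hα, rfl⟩⟩
    by_cases hc : NodeExpr.eqTest α α ∈ C
    · have hkey : IsConjunct (.eqTest α α) (mkNF a C D) := by
        refine mem_conjuncts_foldl' _ D (.lab a) (.eqTest α α) _ hmemD ?_
        rw [if_pos hc]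
        simp [conjuncts]
      exact ⟨fun _ => hkey, fun _ => hkey⟩
    · have hneg : NodeExpr.neg (.eqTest α α) ∈ conjuncts (mkNF a C D) := by
        refine mem_conjuncts_foldl' _ D (.lab a) _ _ hmemD ?_
        rw [if_neg hc]
        simp [conjuncts]
      have hle : NDer (nOr (mkNF a C D) (.neg (.eqTest α α))) (.neg (.eqTest α α)) :=
        conjunct_le _ _ hneg
      have hle' : NDer (nOr (mkNF a C D) (.neg (.diam α))) (.neg (.diam α)) :=
        (orCongr (NDer.refl _) (NDer.congr_neg (NDer.eqAx6 α).symm)).trans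
          (hle.trans (NDer.congr_neg (NDer.eqAx6 α)))
      have hbot : PDer (.comp (.test (mkNF a C D)) α) botP := path_bot α hle'
      exact ⟨fun h => absurd hbot h, fun h => absurd (diam_bot hbot) h⟩
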